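/- arXiv:2411.08372 — 4 statements merged into one kernel-verified Lean document; each statement's English description precedes it below -/
import Mathlib

section
/- For every natural number n and every l ∈ {0,1,2,3,4,5}, there exists a triangle-free finite simple graph G with |G| > n, exactly l vertices of degree 1, ρ_G^3 = 3, and no equitable 3-coloring. -/
/-!
The graph is a flower: `l` pendant edges, `5 - l` five-cycles and `n + 1` seven-cycles sharing
one centre. By the handshake lemma `ρ³(A)` is the sum over `v ∈ A` of
`3 d_A(v) - 7 + 3 [d(v) = 1]`, so it splits into `-7` for the centre plus one share per petal.
A finite check shows that the share of a pendant edge or a five-cycle is at most `2`, that of a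
seven-cycle at most `0`, with equality for the whole petal, and that every share is at most `0`
when the centre is left out; hence `ρ³ = -7 + 2 · 5 = 3`. In a proper colouring the class of
the centre contains no other vertex of a pendant edge, at most one of a five-cycle and at most
two of a seven-cycle, so it has at most `6 - l + 2(n + 1)` of the `21 - 3l + 6(n + 1)` vertices:
fewer than a third, which an equitable 3-colouring forbids.
-/

open SimpleGraph

variable {V : Type*}

/-- `n mod* k`: the unique `m ∈ {1,…,k}` with `n ≡ m (mod k)`. -/
def modStar (n k : ℕ) : ℕ := if n % k = 0 then k else n % k

/-- The degree of vertex `v` in `G`. -/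
noncomputable def deg (G : SimpleGraph V) (v : V) : ℕ := Set.ncard {u | G.Adj v u}

/-- The number of edges of the induced subgraph `G[A]`. -/
noncomputable def edgesWithin (G : SimpleGraph V) (A : Finset V) : ℕ :=
  Set.ncard {e : Sym2 V | e ∈ G.edgeSet ∧ ∀ v ∈ e, v ∈ A}

/-- The number of vertices of degree 1 in `G`. -/
noncomputable def V1count (G : SimpleGraph V) : ℕ := Set.ncard {v | deg G v = 1}

/-- `f` is a strongly equitable (SE) `L`-coloring of the induced subgraph `G[W]`:
a proper coloring from the lists in which every color class has at most
`⌈|W|/k⌉` vertices and at most `|W| mod* k` color classes are full. -/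
def IsSEColoringOn [Fintype V] [DecidableEq V] (G : SimpleGraph V) (k : ℕ)
    (L : V → Finset ℕ) (W : Finset V) (f : V → ℕ) : Prop :=
  (∀ v ∈ W, f v ∈ L v) ∧
  (∀ u ∈ W, ∀ v ∈ W, G.Adj u v → f u ≠ f v) ∧
  (∀ c : ℕ, (W.filter fun v => f v = c).card ≤ (W.card + k - 1) / k) ∧
  ((W.image f).filter fun c => (W.filter fun v => f v = c).card = (W.card + k - 1) / k).card
    ≤ modStar W.card k

/-- `G` is strongly equitably `k`-choosable. -/
def SEChoosable [Fintype V] [DecidableEq V] (G : SimpleGraph V) (k : ℕ) : Prop :=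
  ∀ L : V → Finset ℕ, (∀ v, (L v).card = k) → ∃ f : V → ℕ, IsSEColoringOn G k L Finset.univ f

/-- `S` is safe in `G[U]` (w.r.t. the `k`-list assignment `L`): every SE `L`-coloring of
`G[U] − S` extends to an SE `L`-coloring of `G[U]`. -/
def SafeIn [Fintype V] [DecidableEq V] (G : SimpleGraph V) (k : ℕ)
    (L : V → Finset ℕ) (U S : Finset V) : Prop :=
  ∀ f : V → ℕ, IsSEColoringOn G k L (U \ S) f →
    ∃ g : V → ℕ, (∀ v ∈ U \ S, g v = f v) ∧ IsSEColoringOn G k L U g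

/-- The potential `ρ_G^k(A)` (for `k ∈ {3,4}`). -/
noncomputable def rhoA (G : SimpleGraph V) (k : ℕ) (A : Finset V) : ℤ :=
  (if k = 3 then 6 else 4) * (edgesWithin G A : ℤ) - (if k = 3 then 7 else 5) * (A.card : ℤ)
    + (if k = 3 then 3 else 2) * (Set.ncard {v | v ∈ A ∧ deg G v = 1} : ℤ)

/-- `ρ_G^k`: the maximum of `ρ_G^k(A)` over all `A ⊆ V(G)`. -/
noncomputable def rhoMax [Fintype V] [DecidableEq V] (G : SimpleGraph V) (k : ℕ) : ℤ :=
  ((Finset.univ : Finset (Finset V)).image (rhoA G k)).max'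
    (Finset.image_nonempty.mpr ⟨∅, Finset.mem_univ ∅⟩)

/-- `σ_G^k`: `|V_1(G)| mod 2` if `k = 4`, and `0` if `k = 3`. -/
noncomputable def sigmaK (G : SimpleGraph V) (k : ℕ) : ℤ :=
  if k = 4 then ((V1count G % 2 : ℕ) : ℤ) else 0

/-- `(G, L)` is a minimal counterexample for `k`: `L` is a `k`-list assignment,
`ρ_G^k ≤ 2 − σ_G^k`, `G` has no SE `L`-coloring, and every smaller graph (measured by
`|H| + |V_1(H)|`) satisfying the potential condition is SE colorable from every
`k`-list assignment. -/
def MinCounterexample [Fintype V] [DecidableEq V] (G : SimpleGraph V) (k : ℕ)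
    (L : V → Finset ℕ) : Prop :=
  (∀ v, (L v).card = k) ∧
  rhoMax G k ≤ 2 - sigmaK G k ∧
  (¬ ∃ f : V → ℕ, IsSEColoringOn G k L Finset.univ f) ∧
  ∀ (m : ℕ) (H : SimpleGraph (Fin m)) (L' : Fin m → Finset ℕ),
    (∀ v, (L' v).card = k) →
    rhoMax H k ≤ 2 - sigmaK H k →
    m + V1count H < Fintype.card V + V1count G →
    ∃ f : Fin m → ℕ, IsSEColoringOn H k L' Finset.univ f

/-- `B` is a bug in `G` with root `r`: a connected induced subgraph in which every
vertex other than possibly `r` has degree at most 2 in `G`. -/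
def IsBug (G : SimpleGraph V) (B : Finset V) (r : V) : Prop :=
  r ∈ B ∧ (G.induce (↑B : Set V)).Connected ∧ ∀ v ∈ B, v ≠ r → deg G v ≤ 2

/-- The closed neighborhood `N[B]`. -/
def closedNbhd (G : SimpleGraph V) (B : Finset V) : Set V :=
  {v | v ∈ B ∨ ∃ u ∈ B, G.Adj u v}

/-- `λ_B`: the number of plain 2-threads `P` with `r ∈ P ⊆ N[B]`; such a thread
`s x y a` is recorded by its middle edge `s(x, y)`. -/
noncomputable def lambdaB (G : SimpleGraph V) (B : Finset V) (r : V) : ℕ :=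
  Set.ncard {e : Sym2 V | ∃ s x y a : V, e = s(x, y) ∧
    3 ≤ deg G s ∧ deg G x ≤ 2 ∧ deg G y ≤ 2 ∧ 3 ≤ deg G a ∧
    G.Adj s x ∧ G.Adj x y ∧ G.Adj y a ∧ s ≠ a ∧
    r ∈ ({s, x, y, a} : Set V) ∧
    s ∈ closedNbhd G B ∧ x ∈ closedNbhd G B ∧ y ∈ closedNbhd G B ∧ a ∈ closedNbhd G B}

/-- `v` is a body vertex for root `r`: `v ≠ r` and `v` lies on a loose or closed
thread ending at `r`. -/
def IsBodyVertex (G : SimpleGraph V) (r v : V) : Prop :=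
  v ≠ r ∧ 3 ≤ deg G r ∧
    ((∃ (a : V) (P : G.Walk r a), P.IsPath ∧ deg G a = 1 ∧
        (∀ u ∈ P.support, u ≠ r → u ≠ a → deg G u ≤ 2) ∧ v ∈ P.support) ∨
     (∃ P : G.Walk r r, P.IsCycle ∧
        (∀ u ∈ P.support, u ≠ r → deg G u ≤ 2) ∧ v ∈ P.support))

/-- `π_B`: the number of body vertices in `B`. -/
noncomputable def piB (G : SimpleGraph V) (B : Finset V) (r : V) : ℕ :=
  Set.ncard {v | v ∈ B ∧ IsBodyVertex G r v}

/-- A wishbone: a bug `B` with root `r ∈ V_k(G)`, `d_B(r) = d_G(r)`, `|B| = k+1`,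
`λ_B = 0` and `π_B = 2`. -/
def IsWishbone [Fintype V] (G : SimpleGraph V) (k : ℕ) (B : Finset V) (r : V) : Prop :=
  IsBug G B r ∧ deg G r = k ∧ (∀ u, G.Adj r u → u ∈ B) ∧
    B.card = k + 1 ∧ lambdaB G B r = 0 ∧ piB G B r = 2

/-- A jellyfish: a bug `B` with root `r ∈ V_k(G)`, `d_B(r) = d_G(r)`, `|B| = k+1`,
`λ_B = 0` and `π_B = 1`. -/
def IsJellyfish [Fintype V] (G : SimpleGraph V) (k : ℕ) (B : Finset V) (r : V) : Prop :=
  IsBug G B r ∧ deg G r = k ∧ (∀ u, G.Adj r u → u ∈ B) ∧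
    B.card = k + 1 ∧ lambdaB G B r = 0 ∧ piB G B r = 1

/-- `B` is a maximal bug with root `r`. -/
def IsMaximalBug (G : SimpleGraph V) (B : Finset V) (r : V) : Prop :=
  IsBug G B r ∧ ∀ B' : Finset V, IsBug G B' r → B ⊆ B' → B' = B

/-- A fork: a maximal bug `B = B(r)` with root `r` of degree `k−1` or `k`,
`|B| = d(r) + 2`, `λ_B = 1` and `π_B = 0`. -/
def IsFork (G : SimpleGraph V) (k : ℕ) (B : Finset V) (r : V) : Prop :=
  IsMaximalBug G B r ∧ (deg G r = k - 1 ∨ deg G r = k) ∧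
    B.card = deg G r + 2 ∧ lambdaB G B r = 1 ∧ piB G B r = 0

/-- `X`: the union of all extreme sets of `G` (w.r.t. `ρ_G^k`). -/
noncomputable def extremeUnion [Fintype V] [DecidableEq V] (G : SimpleGraph V) (k : ℕ) : Set V :=
  {v | ∃ A : Finset V, A.Nonempty ∧ rhoA G k A = rhoMax G k ∧ v ∈ A}

/-- `G` has an equitable `k`-coloring: a proper coloring with `k` colors in which the
sizes of any two color classes differ by at most 1. -/
def HasEquitableColoring [Fintype V] [DecidableEq V] (G : SimpleGraph V) (k : ℕ) : Prop :=
  ∃ f : V → Fin k, (∀ ⦃u v⦄, G.Adj u v → f u ≠ f v) ∧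
    ∀ c₁ c₂ : Fin k,
      (Finset.univ.filter fun v => f v = c₁).card ≤ (Finset.univ.filter fun v => f v = c₂).card + 1

open Finset

section Isomorphism

variable {W : Type*} {G : SimpleGraph V} {G' : SimpleGraph W}

theorem deg_iso (e : G ≃g G') (v : V) : deg G' (e v) = deg G v := by
  have : {u | G'.Adj (e v) u} = e '' {u | G.Adj v u} := by
    ext u
    simp only [Set.mem_ofPred_eq, Set.mem_image]
    exact ⟨fun h => ⟨e.symm u, e.map_adj_iff.mp (by rwa [e.apply_symm_apply]),
      e.apply_symm_apply u⟩, by rintro ⟨u, hu, rfl⟩; exact e.map_adj_iff.mpr hu⟩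
  rw [deg, deg, this, Set.ncard_image_of_injective _ e.injective]

theorem V1count_iso (e : G ≃g G') : V1count G' = V1count G := by
  have : {v | deg G' v = 1} = e '' {v | deg G v = 1} := by
    ext v
    simp only [Set.mem_ofPred_eq, Set.mem_image]
    exact ⟨fun h => ⟨e.symm v, by rwa [← deg_iso e, e.apply_symm_apply], by simp⟩,
      by rintro ⟨v, hv, rfl⟩; rwa [deg_iso]⟩
  rw [V1count, V1count, this, Set.ncard_image_of_injective _ e.injective]

theorem edgesWithin_iso (e : G ≃g G') (A : Finset V) :
    edgesWithin G' (A.map e.toEquiv.toEmbedding) = edgesWithin G A := by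
  have : {f : Sym2 V | f ∈ G.edgeSet ∧ ∀ v ∈ f, v ∈ A} =
      Sym2.map e ⁻¹'
        {f : Sym2 W | f ∈ G'.edgeSet ∧ ∀ v ∈ f, v ∈ A.map e.toEquiv.toEmbedding} := by
    ext f
    induction f using Sym2.ind with
    | _ x y => simp [-Finset.mem_map_equiv, e.map_adj_iff]
  have hsurj : Function.Surjective (Sym2.map e) := fun f =>
    ⟨Sym2.map e.symm f, by simp [Sym2.map_map]⟩
  rw [edgesWithin, edgesWithin, this, Set.ncard_preimage_of_injective_subset_range
    (Sym2.map.injective e.injective) (by simp [hsurj.range_eq])]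

theorem rhoA_iso (e : G ≃g G') (k : ℕ) (A : Finset V) :
    rhoA G' k (A.map e.toEquiv.toEmbedding) = rhoA G k A := by
  have : {v | v ∈ A.map e.toEquiv.toEmbedding ∧ deg G' v = 1} =
      e '' {v | v ∈ A ∧ deg G v = 1} := by
    ext v
    obtain ⟨v, rfl⟩ := e.surjective v
    simp [-Finset.mem_map_equiv, deg_iso]
  rw [rhoA, rhoA, edgesWithin_iso, card_map, this,
    Set.ncard_image_of_injective _ e.injective]

variable [Fintype V] [DecidableEq V] [Fintype W] [DecidableEq W]

theorem rhoMax_iso (e : G ≃g G') (k : ℕ) : rhoMax G' k = rhoMax G k := by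
  have : (univ : Finset (Finset W)).image (rhoA G' k) = univ.image (rhoA G k) := by
    ext r
    simp only [mem_image, mem_univ, true_and]
    constructor
    · rintro ⟨A, rfl⟩
      refine ⟨A.map e.symm.toEquiv.toEmbedding, ?_⟩
      rw [← rhoA_iso e, Finset.map_map]
      simp
    · rintro ⟨A, rfl⟩
      exact ⟨_, rhoA_iso e k A⟩
  simp only [rhoMax, this]

theorem HasEquitableColoring.of_iso {k : ℕ} (e : G ≃g G') (h : HasEquitableColoring G' k) :
    HasEquitableColoring G k := by
  obtain ⟨f, hproper, hbal⟩ := h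
  have hclass (c : Fin k) : #{v | f (e v) = c} = #{w | f w = c} :=
    card_bij (fun v _ => e v) (by simp) (fun _ _ _ _ h => e.injective h)
      (fun w hw => ⟨e.symm w, by simpa using hw, by simp⟩)
  exact ⟨f ∘ e, fun u v huv => hproper (e.map_adj_iff.mpr huv),
    fun c₁ c₂ => by simpa only [Function.comp, hclass] using hbal c₁ c₂⟩

end Isomorphism

theorem rhoMax_eq_of_forall_le [Fintype V] [DecidableEq V] {G : SimpleGraph V} {k : ℕ} {r : ℤ}
    (hle : ∀ A, rhoA G k A ≤ r) {A : Finset V} (hA : rhoA G k A = r) : rhoMax G k = r :=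
  le_antisymm (max'_le _ _ _ (by simpa using hle))
    (hA ▸ le_max' _ _ (mem_image_of_mem _ (mem_univ A)))

def degIn (G : SimpleGraph V) [DecidableRel G.Adj] (A : Finset V) (v : V) : ℕ :=
  #{u ∈ A | G.Adj v u}

section Potential

variable [Fintype V] (G : SimpleGraph V) [DecidableRel G.Adj]

theorem deg_eq_degIn_univ (v : V) : deg G v = degIn G univ v := by
  rw [deg, degIn, ← Set.ncard_coe_finset]
  simp

theorem degIn_eq_card_filter_univ [DecidableEq V] (A : Finset V) (v : V) :
    degIn G A v = #{u | u ∈ A ∧ G.Adj v u} := by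
  rw [degIn]
  congr 1
  ext
  simp

theorem two_mul_edgesWithin (A : Finset V) : 2 * edgesWithin G A = ∑ v ∈ A, degIn G A v := by
  classical
  let GA : SimpleGraph V :=
    { Adj u v := G.Adj u v ∧ u ∈ A ∧ v ∈ A
      symm := ⟨fun _ _ h => ⟨h.1.symm, h.2.2, h.2.1⟩⟩
      loopless := ⟨fun _ h => G.irrefl h.1⟩ }
  have hedges : #GA.edgeFinset = edgesWithin G A := by
    rw [edgesWithin, ← Set.ncard_coe_finset, coe_edgeFinset]
    congr 1
    ext e
    induction e using Sym2.ind with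
    | _ x y => simp [GA]
  have hdeg (v : V) : GA.degree v = if v ∈ A then degIn G A v else 0 := by
    rw [← card_neighborFinset_eq_degree, neighborFinset_eq_filter, degIn]
    split_ifs with hv
    · congr 1
      ext u
      simp [GA, hv, and_comm]
    · simp [GA, hv]
  rw [← hedges, ← sum_degrees_eq_twice_card_edges, Finset.sum_congr rfl fun v _ => hdeg v,
    sum_ite_mem, univ_inter]

def vertexWeight (A : Finset V) (v : V) : ℤ :=
  3 * degIn G A v - 7 + 3 * if degIn G univ v = 1 then 1 else 0

theorem rhoA_three_eq_sum (A : Finset V) : rhoA G 3 A = ∑ v ∈ A, vertexWeight G A v := by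
  classical
  have hedges : 6 * (edgesWithin G A : ℤ) = ∑ v ∈ A, 3 * (degIn G A v : ℤ) := by
    rw [← mul_sum, ← Nat.cast_sum, ← two_mul_edgesWithin]
    push_cast
    ring
  have hleaves : (Set.ncard {v | v ∈ A ∧ deg G v = 1} : ℤ) =
      ∑ v ∈ A, if degIn G univ v = 1 then 1 else 0 := by
    rw [sum_boole, ← Set.ncard_coe_finset]
    simp [deg_eq_degIn_univ]
  simp only [rhoA, if_true, hedges, hleaves, vertexWeight, sum_add_distrib, sum_sub_distrib,
    ← mul_sum, sum_const, nsmul_eq_mul]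
  ring

variable {W : Type*} [Fintype W] [DecidableEq W]

/-- The share of a petal `H` in the potential of a bouquet: the root `none` is charged only
for its edges inside the petal. -/
def rootedPotential (H : SimpleGraph (Option W)) [DecidableRel H.Adj] (T : Finset (Option W)) :
    ℤ :=
  (if none ∈ T then 3 * degIn H T none else 0) +
    ∑ w, if some w ∈ T then vertexWeight H T (some w) else 0

end Potential

theorem card_add_one_le_of_equitable [Fintype V] {k : ℕ} (f : V → Fin k)
    (hbal : ∀ c₁ c₂ : Fin k, #{v | f v = c₁} ≤ #{v | f v = c₂} + 1) (c : Fin k) :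
    Fintype.card V + 1 ≤ k * (#{v | f v = c} + 1) := by
  calc Fintype.card V + 1 = ∑ c', (#{v | f v = c'} + if c' = c then 1 else 0) := by
        rw [sum_add_distrib, ← card_eq_sum_card_fiberwise (fun v _ => mem_univ (f v)),
          sum_ite_eq']
        simp
    _ ≤ ∑ _c' : Fin k, (#{v | f v = c} + 1) := by
        refine sum_le_sum fun c' _ => ?_
        split_ifs with h
        · rw [h]
        · simpa using hbal c' c
    _ = k * (#{v | f v = c} + 1) := by simp

section Bouquet

variable {ι : Type*} {W : ι → Type*}

def petalIncl (i : ι) : Option (W i) ↪ Option (Σ i, W i) :=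
  ⟨Option.map (Sigma.mk i), Option.map_injective sigma_mk_injective⟩

@[simp] theorem petalIncl_none (i : ι) : petalIncl (W := W) i none = none := rfl

@[simp] theorem petalIncl_some (i : ι) (w : W i) : petalIncl i (some w) = some ⟨i, w⟩ := rfl

def bouquet (H : ∀ i, SimpleGraph (Option (W i))) : SimpleGraph (Option (Σ i, W i)) :=
  ⨆ i, (H i).map (petalIncl i)

noncomputable def petalSlice (A : Finset (Option (Σ i, W i))) (i : ι) : Finset (Option (W i)) :=
  A.preimage (petalIncl i) (petalIncl i).injective.injOn

@[simp] theorem mem_petalSlice {A : Finset (Option (Σ i, W i))} {i : ι} {a : Option (W i)} :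
    a ∈ petalSlice A i ↔ petalIncl i a ∈ A :=
  mem_preimage

@[simp] theorem petalSlice_univ [Fintype ι] [∀ i, Fintype (W i)] (i : ι) :
    petalSlice (univ : Finset (Option (Σ i, W i))) i = univ := by
  ext; simp

variable {H : ∀ i, SimpleGraph (Option (W i))}

theorem bouquet_adj {x y : Option (Σ i, W i)} :
    (bouquet H).Adj x y ↔
      ∃ i a b, (H i).Adj a b ∧ petalIncl i a = x ∧ petalIncl i b = y := by
  simp [bouquet, map_adj]

theorem bouquet_adj_some {i : ι} {w : W i} {y : Option (Σ i, W i)} :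
    (bouquet H).Adj (some ⟨i, w⟩) y ↔ ∃ b, (H i).Adj (some w) b ∧ petalIncl i b = y := by
  refine ⟨fun h => ?_, fun ⟨b, hb, hy⟩ => bouquet_adj.mpr ⟨i, some w, b, hb, rfl, hy⟩⟩
  obtain ⟨j, a, b, hab, ha, rfl⟩ := bouquet_adj.mp h
  cases a with
  | none => simp at ha
  | some w' =>
    obtain ⟨rfl, hw⟩ := Sigma.mk.inj_iff.mp (Option.some_inj.mp ha)
    cases hw
    exact ⟨b, hab, rfl⟩

theorem bouquet_adj_petalIncl {i : ι} {a b : Option (W i)} :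
    (bouquet H).Adj (petalIncl i a) (petalIncl i b) ↔ (H i).Adj a b := by
  refine ⟨fun h => ?_, fun h => bouquet_adj.mpr ⟨i, a, b, h, rfl, rfl⟩⟩
  have of_some {w : W i} {b : Option (W i)} :
      (bouquet H).Adj (some ⟨i, w⟩) (petalIncl i b) → (H i).Adj (some w) b := by
    intro h
    obtain ⟨b', hb', he⟩ := bouquet_adj_some.mp h
    rwa [(petalIncl i).injective he] at hb'
  cases a with
  | some w => exact of_some h
  | none =>
    cases b with
    | none => exact absurd h (bouquet H).irrefl
    | some w => exact (of_some h.symm).symm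

theorem bouquet_adj_none_some {i : ι} {w : W i} :
    (bouquet H).Adj none (some ⟨i, w⟩) ↔ (H i).Adj none (some w) :=
  bouquet_adj_petalIncl (a := none) (b := some w)

theorem cliqueFree_three_bouquet (h : ∀ i, (H i).CliqueFree 3) : (bouquet H).CliqueFree 3 := by
  classical
  have no_triangle_at {i : ι} {w : W i} {y z : Option (Σ i, W i)}
      (hy : (bouquet H).Adj (some ⟨i, w⟩) y) (hz : (bouquet H).Adj (some ⟨i, w⟩) z)
      (hyz : (bouquet H).Adj y z) : False := by
    obtain ⟨b, hb, rfl⟩ := bouquet_adj_some.mp hy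
    obtain ⟨c, hc, rfl⟩ := bouquet_adj_some.mp hz
    exact h i {some w, b, c} (is3Clique_triple_iff.mpr ⟨hb, hc, bouquet_adj_petalIncl.mp hyz⟩)
  intro t ht
  obtain ⟨x, y, z, hxy, hxz, hyz, rfl⟩ := is3Clique_iff.mp ht
  match x, y with
  | some ⟨_, _⟩, _ => exact no_triangle_at hxy hxz hyz
  | none, some ⟨_, _⟩ => exact no_triangle_at hxy.symm hyz hxz
  | none, none => exact (bouquet H).irrefl hxy

theorem degIn_bouquet_some [DecidableRel (bouquet H).Adj] [∀ i, DecidableRel (H i).Adj]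
    (A : Finset (Option (Σ i, W i))) (i : ι) (w : W i) :
    degIn (bouquet H) A (some ⟨i, w⟩) = degIn (H i) (petalSlice A i) (some w) := by
  rw [degIn, degIn, ← card_map (petalIncl i)]
  congr 1
  ext y
  simp only [mem_filter, mem_map, mem_petalSlice, bouquet_adj_some]
  constructor
  · rintro ⟨hy, b, hb, rfl⟩
    exact ⟨b, ⟨hy, hb⟩, rfl⟩
  · rintro ⟨b, ⟨hb, hadj⟩, rfl⟩
    exact ⟨hb, b, hadj, rfl⟩

variable [Fintype ι] [∀ i, Fintype (W i)]

theorem card_filter_option_sigma (p : Option (Σ i, W i) → Prop) [DecidablePred p] :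
    #{v | p v} = (if p none then 1 else 0) + ∑ i, #{w | p (some ⟨i, w⟩)} := by
  simp only [card_filter, Fintype.sum_option, Fintype.sum_sigma]

theorem degIn_bouquet_none [DecidableRel (bouquet H).Adj] [∀ i, DecidableRel (H i).Adj]
    (A : Finset (Option (Σ i, W i))) :
    degIn (bouquet H) A none = ∑ i, degIn (H i) (petalSlice A i) none := by
  classical
  rw [degIn_eq_card_filter_univ, card_filter_option_sigma, if_neg (by simp), zero_add]
  refine sum_congr rfl fun i _ => ?_
  rw [degIn_eq_card_filter_univ, card_filter, card_filter, Fintype.sum_option]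
  simp [bouquet_adj_none_some]

theorem deg_bouquet_some (i : ι) (w : W i) :
    deg (bouquet H) (some ⟨i, w⟩) = deg (H i) (some w) := by
  classical
  simp only [deg_eq_degIn_univ, degIn_bouquet_some, petalSlice_univ]

theorem deg_bouquet_none : deg (bouquet H) none = ∑ i, deg (H i) none := by
  classical
  simp only [deg_eq_degIn_univ, degIn_bouquet_none, petalSlice_univ]

theorem vertexWeight_bouquet_some [DecidableRel (bouquet H).Adj] [∀ i, DecidableRel (H i).Adj]
    (A : Finset (Option (Σ i, W i))) (i : ι) (w : W i) :
    vertexWeight (bouquet H) A (some ⟨i, w⟩) =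
      vertexWeight (H i) (petalSlice A i) (some w) := by
  simp only [vertexWeight, degIn_bouquet_some, petalSlice_univ]

theorem rhoA_bouquet [DecidableEq ι] [∀ i, DecidableEq (W i)] [DecidableRel (bouquet H).Adj]
    [∀ i, DecidableRel (H i).Adj] (A : Finset (Option (Σ i, W i))) :
    rhoA (bouquet H) 3 A =
      (if none ∈ A then 3 * (if deg (bouquet H) none = 1 then 1 else 0) - 7 else 0) +
        ∑ i, rootedPotential (H i) (petalSlice A i) := by
  have hroot : vertexWeight (bouquet H) A none =
      3 * ∑ i, (degIn (H i) (petalSlice A i) none : ℤ) - 7 +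
        3 * (if deg (bouquet H) none = 1 then 1 else 0) := by
    simp [vertexWeight, degIn_bouquet_none, deg_eq_degIn_univ]
  rw [rhoA_three_eq_sum, ← sum_ite_mem_eq, Fintype.sum_option, Fintype.sum_sigma]
  simp only [rootedPotential, sum_add_distrib, mem_petalSlice, petalIncl_none, petalIncl_some,
    vertexWeight_bouquet_some, hroot]
  split_ifs <;>
    simp only [mul_sum, sum_const_zero, Nat.cast_mul, Nat.cast_ofNat, Nat.cast_zero] <;> ring

theorem V1count_bouquet :
    V1count (bouquet H) =
      (if deg (bouquet H) none = 1 then 1 else 0) + ∑ i, #{w | deg (H i) (some w) = 1} := by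
  classical
  rw [V1count, Set.ncard_eq_toFinset_card', Set.toFinset_ofPred, card_filter_option_sigma]
  simp only [deg_bouquet_some]

theorem card_filter_eq_apply_none_le {α : Type*} [DecidableEq α]
    (f : Option (Σ i, W i) → α) (hf : ∀ ⦃u v⦄, (bouquet H).Adj u v → f u ≠ f v)
    (β : ι → ℕ)
    (hβ : ∀ i (S : Finset (W i)), (∀ w ∈ S, ¬(H i).Adj none (some w)) →
      (∀ w ∈ S, ∀ w' ∈ S, ¬(H i).Adj (some w) (some w')) → #S ≤ β i) :
    #{v | f v = f none} ≤ 1 + ∑ i, β i := by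
  rw [card_filter_option_sigma, if_pos rfl]
  gcongr with i
  refine hβ i _ (fun w hw hadj => ?_) (fun w hw w' hw' hadj => ?_) <;>
    simp only [mem_filter, mem_univ, true_and] at hw
  · exact hf (bouquet_adj_none_some.mpr hadj) hw.symm
  · simp only [mem_filter, mem_univ, true_and] at hw'
    exact hf (bouquet_adj_petalIncl (a := some w) (b := some w') |>.mpr hadj) (hw.trans hw'.symm)

end Bouquet

/-- The cycle through `none` of length `n + 1`; since `cycleGraph 2` is a single edge,
`petal 1` is a pendant edge. -/
def petal (n : ℕ) : SimpleGraph (Option (Fin n)) :=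
  (cycleGraph (n + 1)).comap (finSuccEquiv n).symm

instance (n : ℕ) : DecidableRel (petal n).Adj := fun _ _ =>
  inferInstanceAs (Decidable ((cycleGraph (n + 1)).Adj _ _))

section Petal

variable {n : ℕ}

theorem cliqueFree_three_petal (hn : n = 1 ∨ n = 4 ∨ n = 6) : (petal n).CliqueFree 3 := by
  intro t ht
  obtain ⟨a, b, c, hab, hac, hbc, rfl⟩ := is3Clique_iff.mp ht
  revert a b c
  rcases hn with rfl | rfl | rfl <;> decide

theorem deg_petal_none (hn : n = 1 ∨ n = 4 ∨ n = 6) :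
    deg (petal n) none = if n = 1 then 1 else 2 := by
  rw [deg_eq_degIn_univ]
  rcases hn with rfl | rfl | rfl <;> decide

theorem card_leaves_petal (hn : n = 1 ∨ n = 4 ∨ n = 6) :
    #{w | deg (petal n) (some w) = 1} = if n = 1 then 1 else 0 := by
  simp only [deg_eq_degIn_univ]
  rcases hn with rfl | rfl | rfl <;> decide

set_option maxRecDepth 100000 in
theorem rootedPotential_petal_le (hn : n = 1 ∨ n = 4 ∨ n = 6) (T : Finset (Option (Fin n))) :
    rootedPotential (petal n) T ≤ if none ∈ T then (if n = 6 then 0 else 2) else 0 := by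
  revert T
  rcases hn with rfl | rfl | rfl <;> decide

set_option maxRecDepth 100000 in
theorem rootedPotential_petal_univ (hn : n = 1 ∨ n = 4 ∨ n = 6) :
    rootedPotential (petal n) univ = if n = 6 then 0 else 2 := by
  rcases hn with rfl | rfl | rfl <;> decide

theorem card_le_of_indep_petal (hn : n = 1 ∨ n = 4 ∨ n = 6) (S : Finset (Fin n))
    (hroot : ∀ w ∈ S, ¬(petal n).Adj none (some w))
    (hindep : ∀ w ∈ S, ∀ w' ∈ S, ¬(petal n).Adj (some w) (some w')) :
    #S ≤ (n - 1) / 2 := by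
  revert S
  rcases hn with rfl | rfl | rfl <;> decide

end Petal

def flowerPetal (a b c : ℕ) : Fin a ⊕ Fin b ⊕ Fin c → ℕ :=
  Sum.elim (fun _ => 1) (Sum.elim (fun _ => 4) (fun _ => 6))

def flower (a b c : ℕ) : SimpleGraph (Option (Σ i, Fin (flowerPetal a b c i))) :=
  bouquet fun i => petal (flowerPetal a b c i)

section Flower

variable {a b c : ℕ}

theorem flowerPetal_mem (i : Fin a ⊕ Fin b ⊕ Fin c) :
    flowerPetal a b c i = 1 ∨ flowerPetal a b c i = 4 ∨ flowerPetal a b c i = 6 := by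
  rcases i with _ | _ | _ <;> simp [flowerPetal]

theorem sum_flowerPetal {M : Type*} [AddCommMonoid M] (g : ℕ → M) :
    ∑ i, g (flowerPetal a b c i) = a • g 1 + b • g 4 + c • g 6 := by
  simp [flowerPetal, Fintype.sum_sum_type, add_assoc]

theorem card_flower :
    Fintype.card (Option (Σ i, Fin (flowerPetal a b c i))) = 1 + a + 4 * b + 6 * c := by
  rw [Fintype.card_option, Fintype.card_sigma]
  simp only [Fintype.card_fin]
  rw [sum_flowerPetal fun n => n, smul_eq_mul, smul_eq_mul, smul_eq_mul]
  ring

theorem deg_flower_none : deg (flower a b c) none = a + 2 * b + 2 * c := by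
  rw [flower, deg_bouquet_none, sum_congr rfl fun i _ => deg_petal_none (flowerPetal_mem i),
    sum_flowerPetal fun n => if n = 1 then 1 else 2]
  simp only [↓reduceIte, OfNat.ofNat_ne_one, smul_eq_mul, mul_one]
  ring

theorem V1count_flower (h : 2 ≤ a + b + c) : V1count (flower a b c) = a := by
  rw [flower, V1count_bouquet, ← flower, deg_flower_none, if_neg (by omega),
    sum_congr rfl fun i _ => card_leaves_petal (flowerPetal_mem i),
    sum_flowerPetal fun n => if n = 1 then 1 else 0]
  simp

theorem cliqueFree_three_flower : (flower a b c).CliqueFree 3 :=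
  cliqueFree_three_bouquet fun i => cliqueFree_three_petal (flowerPetal_mem i)

theorem rhoA_flower_le (h : 4 ≤ a + b) (A : Finset (Option (Σ i, Fin (flowerPetal a b c i)))) :
    rhoA (flower a b c) 3 A ≤ 2 * (a + b) - 7 := by
  classical
  have hpetal (i : Fin a ⊕ Fin b ⊕ Fin c) :=
    rootedPotential_petal_le (flowerPetal_mem i) (petalSlice A i)
  rw [flower, rhoA_bouquet, ← flower]
  by_cases hA : none ∈ A
  · simp only [mem_petalSlice, petalIncl_none, hA, if_true] at hpetal
    have hsum := sum_le_sum fun i (_ : i ∈ univ) => hpetal i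
    rw [sum_flowerPetal fun n => if n = 6 then (0 : ℤ) else 2] at hsum
    rw [if_pos hA, deg_flower_none, if_neg (by omega)]
    simp only [Nat.reduceEqDiff, reduceIte, smul_zero, add_zero, nsmul_eq_mul] at hsum
    linarith
  · simp only [mem_petalSlice, petalIncl_none, hA, if_false] at hpetal
    have hsum := sum_nonpos fun i (_ : i ∈ univ) => hpetal i
    rw [if_neg hA]
    omega

theorem rhoA_flower_univ (h : 2 ≤ a + b + c) :
    rhoA (flower a b c) 3 univ = 2 * (a + b) - 7 := by
  classical
  rw [flower, rhoA_bouquet, ← flower, if_pos (mem_univ _), deg_flower_none, if_neg (by omega),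
    sum_congr rfl fun i _ => by
      rw [petalSlice_univ, rootedPotential_petal_univ (flowerPetal_mem i)],
    sum_flowerPetal fun n => if n = 6 then (0 : ℤ) else 2]
  simp only [Nat.reduceEqDiff, ↓reduceIte, nsmul_zero, add_zero, Int.nsmul_eq_mul]
  ring

theorem rhoMax_flower (h : 4 ≤ a + b) : rhoMax (flower a b c) 3 = 2 * (a + b) - 7 :=
  rhoMax_eq_of_forall_le (rhoA_flower_le h) (rhoA_flower_univ (by omega))

theorem not_hasEquitableColoring_flower (h : 5 ≤ a + b) :
    ¬HasEquitableColoring (flower a b c) 3 := by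
  rintro ⟨f, hproper, hbal⟩
  have hroot := card_filter_eq_apply_none_le f hproper _ fun i =>
    card_le_of_indep_petal (flowerPetal_mem i)
  have hbalanced := card_add_one_le_of_equitable f hbal (f none)
  rw [sum_flowerPetal fun n => (n - 1) / 2] at hroot
  rw [card_flower] at hbalanced
  simp only [smul_eq_mul] at hroot
  omega

end Flower

/-- For every `n` and every `l ∈ {0,…,5}` there is a triangle-free finite
simple graph `G` with `|G| > n`, exactly `l` vertices of degree 1, `ρ_G^3 = 3`, and no
equitable 3-coloring. -/
theorem stmt4 (n l : ℕ) (hl : l ≤ 5) :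
    ∃ (m : ℕ) (G : SimpleGraph (Fin m)),
      n < m ∧
      G.CliqueFree 3 ∧
      V1count G = l ∧
      rhoMax G 3 = 3 ∧
      ¬ HasEquitableColoring G 3 := by
  have hcard := card_flower (a := l) (b := 5 - l) (c := n + 1)
  let e := (flower l (5 - l) (n + 1)).overFinIso hcard
  refine ⟨_, _, by omega, cliqueFree_three_flower.comap e.isContained', ?_, ?_, ?_⟩
  · rw [V1count_iso e, V1count_flower (by omega)]
  · rw [rhoMax_iso e, rhoMax_flower (by omega)]
    omega
  · exact fun h => not_hasEquitableColoring_flower (by omega) (h.of_iso e)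
end

section
/- Let G be a finite simple graph, k ≥ 3, and L a k-list assignment of G. If S_0 and S_1 are disjoint induced subgraphs of G such that S_0 is safe in G − S_1 (with respect to the restriction of L) and S_1 is safe in G (with respect to L), then the induced subgraph on V(S_0) ∪ V(S_1) is safe in G. -/
open SimpleGraph

variable {V : Type*}

/-- If `S₀` and `S₁` are disjoint induced subgraphs of `G` such that `S₀` is
safe in `G − S₁` and `S₁` is safe in `G`, then `S₀ ∪ S₁` is safe in `G`. -/
theorem stmt6 {V : Type*} [Fintype V] [DecidableEq V] (G : SimpleGraph V)
    (k : ℕ) (hk : 3 ≤ k) (L : V → Finset ℕ) (hL : ∀ v, (L v).card = k)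
    (S₀ S₁ : Finset V) (hdisj : Disjoint S₀ S₁)
    (h0 : SafeIn G k L (Finset.univ \ S₁) S₀)
    (h1 : SafeIn G k L Finset.univ S₁) :
    SafeIn G k L Finset.univ (S₀ ∪ S₁) := by
  intro f hf
  have hset : (Finset.univ \ S₁) \ S₀ = Finset.univ \ (S₀ ∪ S₁) := by
    ext v; simp [and_comm]
  rw [← hset] at hf
  obtain ⟨g, hg1, hg2⟩ := h0 f hf
  obtain ⟨h, hh1, hh2⟩ := h1 g hg2
  refine ⟨h, ?_, hh2⟩
  intro v hv
  rw [← hset] at hv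
  rw [hh1 v (Finset.sdiff_subset hv), hg1 v hv]
end

section
/- Let G be a finite simple graph, k ≥ 3, and L a k-list assignment of G. Let S = G[{v_1,…,v_s}] be an induced subgraph on s distinct vertices with s ≤ k. If for every i ∈ {1,…,s} the number of edges joining v_i to G − S is strictly less than i, then S is safe in G. -/
open SimpleGraph

variable {V : Type*}

private lemma stmt7_modStar_spec (n k : ℕ) (hk : 1 ≤ k) (hn : 1 ≤ n) :
    n + k = ((n + k - 1) / k) * k + modStar n k ∧ 1 ≤ modStar n k ∧ modStar n k ≤ k := by
  have hmod := Nat.div_add_mod n k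
  have hm : (n / k) * k + n % k = n := by rw [mul_comm]; omega
  rcases Nat.eq_zero_or_pos (n % k) with h0 | hpos
  · have hq : 1 ≤ n / k := by
      rcases Nat.eq_zero_or_pos (n / k) with h | h
      · rw [h, Nat.zero_mul] at hm; omega
      · exact h
    have hdiv : (n + k - 1) / k = n / k := by
      have he : n + k - 1 = (k - 1) + (n / k) * k := by omega
      have h1 : (k - 1) / k = 0 := Nat.div_eq_of_lt (by omega)
      rw [he, Nat.add_mul_div_right _ _ (by omega : 0 < k), h1]
      omega
    rw [show modStar n k = k from by simp [modStar, h0], hdiv]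
    omega
  · have hlt : n % k < k := Nat.mod_lt _ (by omega)
    have hdiv : (n + k - 1) / k = n / k + 1 := by
      have he : n + k - 1 = (n % k + k - 1) + (n / k) * k := by omega
      have h1 : (n % k + k - 1) / k = 1 := Nat.div_eq_of_lt_le (by omega) (by omega)
      rw [he, Nat.add_mul_div_right _ _ (by omega : 0 < k), h1]
      omega
    rw [show modStar n k = n % k from by simp [modStar]; omega, hdiv]
    have : (n / k + 1) * k = (n / k) * k + k := by ring
    omega

private lemma stmt7_modStar_unique (n k T M : ℕ) (hk : 1 ≤ k) (hM1 : 1 ≤ M) (hMk : M ≤ k)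
    (h : n + k = T * k + M) : T = (n + k - 1) / k ∧ M = modStar n k := by
  rcases (by omega : 1 ≤ n ∨ n = 0) with hn | rfl
  · obtain ⟨h1, h2, h3⟩ := stmt7_modStar_spec n k hk hn
    set T' := (n + k - 1) / k with hT'
    set M' := modStar n k with hM'
    have hTT : T = T' := by
      rcases lt_trichotomy T T' with hc | hc | hc
      · exfalso
        have hx : (T + 1) * k ≤ T' * k := Nat.mul_le_mul_right k hc
        have hy : (T + 1) * k = T * k + k := by ring
        omega
      · exact hc
      · exfalso
        have hx : (T' + 1) * k ≤ T * k := Nat.mul_le_mul_right k hc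
        have hy : (T' + 1) * k = T' * k + k := by ring
        omega
    refine ⟨hTT, ?_⟩
    rw [hTT] at h; omega
  · have hms : modStar 0 k = k := by simp [modStar]
    have hdiv : (0 + k - 1) / k = 0 := Nat.div_eq_of_lt (by omega)
    have hT : T = 0 := by
      by_contra hc
      have : 1 * k ≤ T * k := Nat.mul_le_mul_right k (by omega)
      omega
    subst hT
    simp only [Nat.zero_mul, Nat.zero_add] at h
    exact ⟨hdiv.symm, by omega⟩

private lemma stmt7_greedy (P : ℕ → Prop) [DecidablePred P] (Φ : Finset ℕ) :
    ∀ (s : ℕ) (A : Fin s → Finset ℕ), (∀ i : Fin s, s + Φ.card ≤ (A i).card + (i : ℕ)) →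
    ∃ c : Fin s → ℕ, Function.Injective c ∧ (∀ i, c i ∈ A i ∧ c i ∉ Φ) ∧
      (∀ i : Fin s, ¬ P (c i) →
        ∀ x, x ∈ A i → P x → x ∉ Φ → ∃ j, i < j ∧ c j = x) := by
  intro s
  induction s with
  | zero =>
    intro A hA
    exact ⟨fun i => i.elim0, fun i => i.elim0, fun i => i.elim0, fun i => i.elim0⟩
  | succ s ih =>
    intro A hA
    have hpoolcard : 1 ≤ (A (Fin.last s) \ Φ).card := by
      have h1 := Finset.le_card_sdiff Φ (A (Fin.last s))
      have h2 := hA (Fin.last s)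
      simp only [Fin.val_last] at h2
      omega
    have hpool : (A (Fin.last s) \ Φ).Nonempty := Finset.card_pos.mp hpoolcard
    have hchoice : ∃ x, x ∈ A (Fin.last s) \ Φ ∧
        (¬ P x → ∀ y ∈ A (Fin.last s) \ Φ, ¬ P y) := by
      by_cases hpref : ((A (Fin.last s) \ Φ).filter P).Nonempty
      · obtain ⟨hx1, hx2⟩ := Finset.mem_filter.mp (Finset.min'_mem _ hpref)
        exact ⟨_, hx1, fun h => absurd hx2 h⟩
      · exact ⟨_, Finset.min'_mem _ hpool,
          fun _ y hy hPy => hpref ⟨y, Finset.mem_filter.mpr ⟨hy, hPy⟩⟩⟩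
    obtain ⟨x, hxpool, hxforced⟩ := hchoice
    obtain ⟨hxA, hxΦ⟩ := Finset.mem_sdiff.mp hxpool
    obtain ⟨c', hinj', hmem', hforce'⟩ := ih (fun i => A i.castSucc \ {x}) (by
      intro i
      show s + Φ.card ≤ (A i.castSucc \ {x}).card + (i : ℕ)
      have h1 := hA i.castSucc
      have h2 : (A i.castSucc).card ≤ (A i.castSucc \ {x}).card + 1 := by
        have := Finset.card_le_card_sdiff_add_card (s := A i.castSucc) (t := {x})
        simpa using this
      simp only [Fin.coe_castSucc] at h1
      omega)
    have hmemx : ∀ i : Fin s, c' i ∈ A i.castSucc \ {x} ∧ c' i ∉ Φ := hmem'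
    refine ⟨Fin.lastCases x c', ?_, ?_, ?_⟩
    · intro a b hab
      induction a using Fin.lastCases with
      | last =>
        induction b using Fin.lastCases with
        | last => rfl
        | cast b =>
          exfalso
          simp only [Fin.lastCases_last, Fin.lastCases_castSucc] at hab
          have := (hmemx b).1
          rw [← hab] at this
          exact (Finset.mem_sdiff.mp this).2 (Finset.mem_singleton_self x)
      | cast a =>
        induction b using Fin.lastCases with
        | last =>
          exfalso
          simp only [Fin.lastCases_last, Fin.lastCases_castSucc] at hab
          have := (hmemx a).1
          rw [hab] at this
          exact (Finset.mem_sdiff.mp this).2 (Finset.mem_singleton_self x)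
        | cast b =>
          simp only [Fin.lastCases_castSucc] at hab
          rw [hinj' hab]
    · intro i
      induction i using Fin.lastCases with
      | last =>
        simp only [Fin.lastCases_last]
        exact ⟨hxA, hxΦ⟩
      | cast i =>
        simp only [Fin.lastCases_castSucc]
        obtain ⟨h1, h2⟩ := hmemx i
        exact ⟨(Finset.mem_sdiff.mp h1).1, h2⟩
    · intro i hPi y hyA hPy hyΦ
      induction i using Fin.lastCases with
      | last =>
        simp only [Fin.lastCases_last] at hPi
        exact absurd hPy (hxforced hPi y (Finset.mem_sdiff.mpr ⟨hyA, hyΦ⟩))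
      | cast i =>
        simp only [Fin.lastCases_castSucc] at hPi
        by_cases hxy : y = x
        · refine ⟨Fin.last s, Fin.castSucc_lt_last i, ?_⟩
          simp only [Fin.lastCases_last]
          exact hxy.symm
        · obtain ⟨j, hj1, hj2⟩ := hforce' i hPi y
            (Finset.mem_sdiff.mpr ⟨hyA, Finset.notMem_singleton.mpr hxy⟩) hPy hyΦ
          refine ⟨j.castSucc, by simpa using hj1, ?_⟩
          simp only [Fin.lastCases_castSucc]
          exact hj2


/-- If `S = G[{v_1,…,v_s}]` with `s ≤ k` distinct vertices and, for each
`i ∈ {1,…,s}`, the number of edges joining `v_i` to `G − S` is less than `i`, then `S` is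
safe in `G`. -/
theorem stmt7 {V : Type*} [Fintype V] [DecidableEq V] (G : SimpleGraph V)
    (k : ℕ) (hk : 3 ≤ k) (L : V → Finset ℕ) (hL : ∀ v, (L v).card = k)
    (s : ℕ) (hs : s ≤ k) (v : Fin s → V) (hinj : Function.Injective v)
    (hdeg : ∀ i : Fin s,
      Set.ncard {u | G.Adj (v i) u ∧ u ∉ Finset.image v Finset.univ} < (i : ℕ) + 1) :
    SafeIn G k L Finset.univ (Finset.image v Finset.univ) := by
  classical
  intro f hf
  by_cases hs0 : s = 0
  · subst hs0
    have hS : (Finset.image v Finset.univ) = (∅ : Finset V) := by simp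
    rw [hS, Finset.sdiff_empty] at hf ⊢
    exact ⟨f, fun x _ => rfl, hf⟩
  -- setup
  set S : Finset V := Finset.image v Finset.univ with hSdef
  set W' : Finset V := Finset.univ \ S with hW'def
  obtain ⟨hf1, hf2, hf3, hf4⟩ := hf
  unfold IsSEColoringOn
  set n : ℕ := (Finset.univ : Finset V).card with hndef
  have hScard : S.card = s := by
    rw [hSdef, Finset.card_image_of_injective _ hinj, Finset.card_univ, Fintype.card_fin]
  have hsn : s ≤ n := by
    rw [← hScard, hndef]; exact Finset.card_le_card (Finset.subset_univ S)
  have hW'aux : W'.card = n - S.card := by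
    rw [hW'def, Finset.card_sdiff_of_subset (Finset.subset_univ S), hndef]
  set n' : ℕ := W'.card with hn'def
  have hW'card : n' + s = n := by omega
  set t : ℕ := (n + k - 1) / k with htdef
  set m : ℕ := modStar n k with hmdef
  set t' : ℕ := (n' + k - 1) / k with ht'def
  set m' : ℕ := modStar n' k with hm'def
  clear_value n n' t m t' m'
  have hk1 : 1 ≤ k := by omega
  have hn1 : 1 ≤ n := by omega
  obtain ⟨hnk, hm1, hmk⟩ := stmt7_modStar_spec n k hk1 hn1
  rw [← htdef] at hnk
  rw [← hmdef] at hnk hm1 hmk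
  have ht1 : 1 ≤ t := by
    by_contra h
    have ht0 : t = 0 := by omega
    rw [ht0, Nat.zero_mul] at hnk
    omega
  have hcase : (t' = t ∧ m' + s = m) ∨ (t' + 1 = t ∧ m' + s = k + m) := by
    rcases lt_or_ge s m with hsm | hms
    · left
      have hx : n' + k = t * k + (m - s) := by omega
      have := stmt7_modStar_unique n' k t (m - s) hk1 (by omega) (by omega) hx
      rw [← ht'def, ← hm'def] at this
      exact ⟨this.1.symm, by omega⟩
    · right
      obtain ⟨t'', ht''⟩ : ∃ t'', t = t'' + 1 := ⟨t - 1, by omega⟩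
      have hexp : t * k = t'' * k + k := by rw [ht'']; ring
      have hx : n' + k = t'' * k + (k + m - s) := by omega
      have := stmt7_modStar_unique n' k t'' (k + m - s) hk1 (by omega) (by omega) hx
      rw [← ht'def, ← hm'def] at this
      exact ⟨by omega, by omega⟩
  have ht't : t' ≤ t := by rcases hcase with ⟨h, _⟩ | ⟨h, _⟩ <;> omega
  -- color classes of f
  have hf3' : ∀ col, (W'.filter fun u => f u = col).card ≤ t' := hf3
  have hFFcard :
      ((W'.image f).filter fun col => (W'.filter fun u => f u = col).card = t').card ≤ m' := hf4
  -- the set of overfull colors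
  set Φf : Finset ℕ := (W'.image f).filter (fun col => t ≤ (W'.filter fun u => f u = col).card)
    with hΦdef
  have hΦmem : ∀ col, t ≤ (W'.filter fun u => f u = col).card → col ∈ Φf := by
    intro col hcol
    refine Finset.mem_filter.mpr ⟨?_, hcol⟩
    have hpos : 0 < (W'.filter fun u => f u = col).card := by omega
    obtain ⟨u, hu⟩ := Finset.card_pos.mp hpos
    exact Finset.mem_image.mpr ⟨u, (Finset.mem_filter.mp hu).1, (Finset.mem_filter.mp hu).2⟩
  have hnotΦ : ∀ col, col ∉ Φf → (W'.filter fun u => f u = col).card + 1 ≤ t := by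
    intro col h
    by_contra h2
    exact h (hΦmem col (by omega))
  have hΦcard : Φf.card + s ≤ k := by
    rcases hcase with ⟨hteq, hmeq⟩ | ⟨hteq, hmeq⟩
    · have hsub : Φf ⊆ (W'.image f).filter fun col => (W'.filter fun u => f u = col).card = t' := by
        intro col hcol
        obtain ⟨h1, h2⟩ := Finset.mem_filter.mp hcol
        refine Finset.mem_filter.mpr ⟨h1, ?_⟩
        have := hf3' col
        omega
      have := Finset.card_le_card hsub
      omega
    · have hempty : Φf = ∅ := by
        rw [Finset.eq_empty_iff_forall_notMem]
        intro col hcol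
        obtain ⟨h1, h2⟩ := Finset.mem_filter.mp hcol
        have := hf3' col
        omega
      rw [hempty]
      simp only [Finset.card_empty]
      omega
  -- available lists
  set A : Fin s → Finset ℕ :=
    fun i => L (v i) \ ((W'.filter fun u => G.Adj (v i) u).image f) with hAdef
  have hExtcard : ∀ i : Fin s, ((W'.filter fun u => G.Adj (v i) u).image f).card ≤ (i : ℕ) := by
    intro i
    have h1 := hdeg i
    have heq : {u | G.Adj (v i) u ∧ u ∉ S} = ↑(W'.filter fun u => G.Adj (v i) u) := by
      ext u
      simp only [Set.mem_setOf_eq, Finset.coe_filter, Finset.mem_sdiff, Finset.mem_univ,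
        true_and, hW'def]
      tauto
    rw [heq, Set.ncard_coe_finset] at h1
    have h2 : ((W'.filter fun u => G.Adj (v i) u).image f).card
        ≤ (W'.filter fun u => G.Adj (v i) u).card := Finset.card_image_le
    omega
  have hAcard : ∀ i : Fin s, k ≤ (A i).card + (i : ℕ) := by
    intro i
    have h1 : (L (v i)).card ≤ (A i).card + ((W'.filter fun u => G.Adj (v i) u).image f).card :=
      Finset.card_le_card_sdiff_add_card
    have h2 := hExtcard i
    have h3 := hL (v i)
    omega
  -- greedy choice of colors for S
  obtain ⟨c, hcinj, hcmem, hcforce⟩ :=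
    stmt7_greedy (fun col => (W'.filter fun u => f u = col).card + 1 ≠ t) Φf s A
      (fun i => le_trans (by omega) (hAcard i))
  have hcA : ∀ i, c i ∈ L (v i) ∧ c i ∉ ((W'.filter fun u => G.Adj (v i) u).image f) := by
    intro i
    have := (hcmem i).1
    rw [hAdef] at this
    exact Finset.mem_sdiff.mp this
  -- the extension g
  set g : V → ℕ := Function.extend v c f with hgdef
  have hgv : ∀ i, g (v i) = c i := by
    intro i
    rw [hgdef]
    exact hinj.extend_apply c f i
  have hmemS : ∀ x, x ∈ S ↔ ∃ i, v i = x := by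
    intro x
    rw [hSdef]
    simp [Finset.mem_image]
  have hgnot : ∀ x, x ∉ S → g x = f x := by
    intro x hx
    rw [hgdef]
    refine Function.extend_apply' c f x ?_
    rintro ⟨i, hi⟩
    exact hx ((hmemS x).mpr ⟨i, hi⟩)
  have hgW' : ∀ x ∈ W', g x = f x := by
    intro x hx
    exact hgnot x (Finset.mem_sdiff.mp (hW'def ▸ hx)).2
  -- class decomposition
  have hclass : ∀ col, (Finset.univ.filter fun x => g x = col).card
      = (W'.filter fun u => f u = col).card
        + (Finset.univ.filter fun i : Fin s => c i = col).card := by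
    intro col
    have h1 : Finset.univ.filter (fun x => g x = col)
        = (W'.filter fun x => g x = col) ∪ (S.filter fun x => g x = col) := by
      rw [← Finset.filter_union, hW'def, Finset.sdiff_union_of_subset (Finset.subset_univ S)]
    have h2 : W'.filter (fun x => g x = col) = W'.filter (fun x => f x = col) :=
      Finset.filter_congr (fun x hx => by rw [hgW' x hx])
    have h3 : S.filter (fun x => g x = col)
        = (Finset.univ.filter fun i : Fin s => c i = col).image v := by
      ext x
      simp only [Finset.mem_filter, Finset.mem_image, Finset.mem_univ, true_and]
      constructor
      · rintro ⟨hxS, hgx⟩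
        obtain ⟨i, hi⟩ := (hmemS x).mp hxS
        subst hi
        exact ⟨i, by rw [← hgv i]; exact hgx, rfl⟩
      · rintro ⟨i, hci, rfl⟩
        exact ⟨(hmemS (v i)).mpr ⟨i, rfl⟩, by rw [hgv i]; exact hci⟩
    have h4 : Disjoint (W'.filter fun x => g x = col) (S.filter fun x => g x = col) := by
      apply Finset.disjoint_filter_filter
      rw [hW'def]
      exact Finset.sdiff_disjoint
    rw [h1, Finset.card_union_of_disjoint h4, h2, h3,
      Finset.card_image_of_injective _ hinj]
  have hcsmall : ∀ col, (Finset.univ.filter fun i : Fin s => c i = col).card ≤ 1 := by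
    intro col
    refine Finset.card_le_one.mpr ?_
    intro a ha b hb
    have ha' := (Finset.mem_filter.mp ha).2
    have hb' := (Finset.mem_filter.mp hb).2
    exact hcinj (by rw [ha', hb'])
  -- sizes of classes of g
  have hsize : ∀ col, (Finset.univ.filter fun x => g x = col).card ≤ t := by
    intro col
    rw [hclass col]
    rcases Nat.eq_zero_or_pos (Finset.univ.filter fun i : Fin s => c i = col).card with h | h
    · rw [h]
      have := hf3' col
      omega
    · obtain ⟨i, hi⟩ := Finset.card_pos.mp h
      have hci : c i = col := (Finset.mem_filter.mp hi).2
      have hΦ : col ∉ Φf := hci ▸ (hcmem i).2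
      have := hnotΦ col hΦ
      have := hcsmall col
      omega
  -- number of full classes of g
  set bigIdx : Finset (Fin s) :=
    Finset.univ.filter (fun i : Fin s => (W'.filter fun u => f u = c i).card + 1 = t)
    with hbigdef
  have hfullsub : (Finset.univ.image g).filter
      (fun col => (Finset.univ.filter fun x => g x = col).card = t)
      ⊆ Φf ∪ bigIdx.image c := by
    intro col hcol
    have hsz := (Finset.mem_filter.mp hcol).2
    rw [hclass col] at hsz
    rcases Nat.eq_zero_or_pos (Finset.univ.filter fun i : Fin s => c i = col).card with h | h
    · refine Finset.mem_union_left _ (hΦmem col ?_)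
      omega
    · obtain ⟨i, hi⟩ := Finset.card_pos.mp h
      have hci : c i = col := (Finset.mem_filter.mp hi).2
      have hle := hcsmall col
      refine Finset.mem_union_right _ (Finset.mem_image.mpr ⟨i, ?_, hci⟩)
      rw [hbigdef]
      refine Finset.mem_filter.mpr ⟨Finset.mem_univ i, ?_⟩
      rw [hci]
      omega
  have hcomb : Φf.card + bigIdx.card ≤ m := by
    have hBs : bigIdx.card ≤ s :=
      le_trans (Finset.card_le_card (Finset.subset_univ _)) (by simp)
    rcases hcase with ⟨hteq, hmeq⟩ | ⟨hteq, hmeq⟩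
    · -- case A : Φf ⊆ full classes of f, bigIdx ≤ s
      have hsubA : Φf ⊆ (W'.image f).filter
          fun col => (W'.filter fun u => f u = col).card = t' := by
        intro col hcol
        obtain ⟨h1, h2⟩ := Finset.mem_filter.mp hcol
        refine Finset.mem_filter.mpr ⟨h1, ?_⟩
        have := hf3' col
        omega
      have hA1 := Finset.card_le_card hsubA
      omega
    · -- case B : Φf = ∅ and bigIdx ≤ m
      have hΦempty : Φf = ∅ := by
        rw [Finset.eq_empty_iff_forall_notMem]
        intro col hcol
        obtain ⟨h1, h2⟩ := Finset.mem_filter.mp hcol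
        have := hf3' col
        omega
      have hBigB : bigIdx.card ≤ m := by
        rcases Finset.eq_empty_or_nonempty bigIdx with hBe | hBne
        · rw [hBe]; simp
        rcases Nat.eq_zero_or_pos n' with hn'0 | hn'pos
        · -- W' is empty : m' = k, so m = s
          have hm'k : m' = k := by
            rw [hm'def, hn'0]
            simp [modStar]
          omega
        · -- main counting argument
          have ht'1 : 1 ≤ t' := by
            rw [ht'def, Nat.one_le_div_iff (by omega)]
            omega
          have hFFmem : ∀ col, (W'.filter fun u => f u = col).card + 1 = t →
              col ∈ (W'.image f).filter
                fun col => (W'.filter fun u => f u = col).card = t' := by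
            intro col hcol
            have hc' : (W'.filter fun u => f u = col).card = t' := by omega
            refine Finset.mem_filter.mpr ⟨?_, hc'⟩
            have hpos : 0 < (W'.filter fun u => f u = col).card := by omega
            obtain ⟨u, hu⟩ := Finset.card_pos.mp hpos
            exact Finset.mem_image.mpr
              ⟨u, (Finset.mem_filter.mp hu).1, (Finset.mem_filter.mp hu).2⟩
          set i0 : Fin s := bigIdx.min' hBne with hi0def
          have hi0mem : i0 ∈ bigIdx := Finset.min'_mem _ hBne
          have hi0big : (W'.filter fun u => f u = c i0).card + 1 = t :=
            (Finset.mem_filter.mp hi0mem).2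
          have hforced := hcforce i0 (not_not.mpr hi0big)
          set smalls : Finset ℕ :=
            (A i0).filter (fun x => (W'.filter fun u => f u = x).card + 1 ≠ t) with hsmallsdef
          set J : Finset (Fin s) :=
            (Finset.Ioi i0).filter (fun j => (W'.filter fun u => f u = c j).card + 1 ≠ t)
            with hJdef
          have hsmallsJ : smalls.card ≤ J.card := by
            have hmap : ∀ x ∈ smalls, ∃ j, i0 < j ∧ c j = x := by
              intro x hx
              obtain ⟨hx1, hx2⟩ := Finset.mem_filter.mp hx
              exact hforced x hx1 hx2 (by rw [hΦempty]; exact Finset.notMem_empty x)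
            refine Finset.card_le_card_of_injOn
              (fun x => if h : ∃ j, i0 < j ∧ c j = x then h.choose else i0) ?_ ?_
            · intro x hx
              have hex := hmap x hx
              simp only [dif_pos hex]
              obtain ⟨hj1, hj2⟩ := hex.choose_spec
              refine Finset.mem_filter.mpr ⟨Finset.mem_Ioi.mpr hj1, ?_⟩
              rw [hj2]
              exact (Finset.mem_filter.mp hx).2
            · intro x hx y hy hxy
              have hexx := hmap x (by simpa using hx)
              have hexy := hmap y (by simpa using hy)
              simp only [dif_pos hexx, dif_pos hexy] at hxy
              have h1 := hexx.choose_spec.2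
              have h2 := hexy.choose_spec.2
              rw [← h1, ← h2, hxy]
          have hdisj : Disjoint J (bigIdx.erase i0) := by
            rw [Finset.disjoint_left]
            intro j hjJ hjB
            have h1 := (Finset.mem_filter.mp hjJ).2
            have h2 := (Finset.mem_filter.mp (Finset.mem_of_mem_erase hjB)).2
            exact h1 h2
          have hsubIoi : J ∪ bigIdx.erase i0 ⊆ Finset.Ioi i0 := by
            intro j hj
            rcases Finset.mem_union.mp hj with h | h
            · exact (Finset.mem_filter.mp h).1
            · exact Finset.mem_Ioi.mpr
                (lt_of_le_of_ne (Finset.min'_le _ _ (Finset.mem_of_mem_erase h))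
                  (Ne.symm (Finset.ne_of_mem_erase h)))
          have hcIoi : J.card + (bigIdx.erase i0).card ≤ s - 1 - (i0 : ℕ) := by
            have h1 := Finset.card_le_card hsubIoi
            rw [Finset.card_union_of_disjoint hdisj, Fin.card_Ioi i0] at h1
            exact h1
          have herase : (bigIdx.erase i0).card + 1 = bigIdx.card :=
            Finset.card_erase_add_one hi0mem
          have hi0lt : (i0 : ℕ) < s := i0.isLt
          have hApart : (A i0).card ≤ smalls.card
              + ((W'.image f).filter
                  fun col => (W'.filter fun u => f u = col).card = t').card := by
            have hsplit := Finset.filter_union_filter_not_eq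
              (fun x => (W'.filter fun u => f u = x).card + 1 ≠ t) (A i0)
            have hsub2 : (A i0).filter (fun x => ¬ ((W'.filter fun u => f u = x).card + 1 ≠ t))
                ⊆ (W'.image f).filter
                  fun col => (W'.filter fun u => f u = col).card = t' := by
              intro x hx
              have := (Finset.mem_filter.mp hx).2
              exact hFFmem x (not_not.mp this)
            have hcard2 := Finset.card_le_card hsub2
            calc (A i0).card = (smalls ∪ (A i0).filter
                  (fun x => ¬ ((W'.filter fun u => f u = x).card + 1 ≠ t))).card := by
                  rw [hsmallsdef, hsplit]
            _ ≤ smalls.card + ((A i0).filter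
                  (fun x => ¬ ((W'.filter fun u => f u = x).card + 1 ≠ t))).card :=
                  Finset.card_union_le _ _
            _ ≤ _ := by omega
          have hAi0 := hAcard i0
          omega
      rw [hΦempty]
      simpa using hBigB
  -- final assembly
  refine ⟨g, ?_, ?_, ?_, ?_, ?_⟩
  · intro x hx
    exact hgW' x hx
  · -- lists
    intro x _
    by_cases hx : x ∈ S
    · obtain ⟨i, hi⟩ := (hmemS x).mp hx
      subst hi
      rw [hgv i]
      exact (hcA i).1
    · rw [hgnot x hx]
      exact hf1 x (by rw [hW'def]; exact Finset.mem_sdiff.mpr ⟨Finset.mem_univ x, hx⟩)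
  · -- proper
    intro x _ y _ hadj
    by_cases hxS : x ∈ S <;> by_cases hyS : y ∈ S
    · obtain ⟨i, hi⟩ := (hmemS x).mp hxS
      obtain ⟨j, hj⟩ := (hmemS y).mp hyS
      subst hi; subst hj
      rw [hgv i, hgv j]
      intro h
      exact hadj.ne (congrArg v (hcinj h))
    · obtain ⟨i, hi⟩ := (hmemS x).mp hxS
      subst hi
      rw [hgv i, hgnot y hyS]
      intro h
      apply (hcA i).2
      refine Finset.mem_image.mpr ⟨y, ?_, h.symm⟩
      refine Finset.mem_filter.mpr ⟨?_, hadj⟩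
      rw [hW'def]; exact Finset.mem_sdiff.mpr ⟨Finset.mem_univ y, hyS⟩
    · obtain ⟨j, hj⟩ := (hmemS y).mp hyS
      subst hj
      rw [hgv j, hgnot x hxS]
      intro h
      apply (hcA j).2
      refine Finset.mem_image.mpr ⟨x, ?_, h⟩
      refine Finset.mem_filter.mpr ⟨?_, hadj.symm⟩
      rw [hW'def]; exact Finset.mem_sdiff.mpr ⟨Finset.mem_univ x, hxS⟩
    · rw [hgnot x hxS, hgnot y hyS]
      exact hf2 x (by rw [hW'def]; exact Finset.mem_sdiff.mpr ⟨Finset.mem_univ x, hxS⟩)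
        y (by rw [hW'def]; exact Finset.mem_sdiff.mpr ⟨Finset.mem_univ y, hyS⟩) hadj
  · -- class sizes
    intro col
    exact hsize col
  · -- number of full classes
    refine le_trans (Finset.card_le_card hfullsub) ?_
    have h2 : (Φf ∪ bigIdx.image c).card ≤ Φf.card + (bigIdx.image c).card :=
      Finset.card_union_le _ _
    have h3 : (bigIdx.image c).card ≤ bigIdx.card := Finset.card_image_le
    omega
end

section
/- Let G be a finite simple graph, k ≥ 3, and L a k-list assignment of G. Let B ⊆ G be a bug with root r, where the degree of r in G is at most k and the number of edges from r to G − B is strictly less than |B| ≤ k. If B has a hidden vertex, then B is safe in G. -/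
open SimpleGraph

variable {V : Type*}

/-! Colour `B` greedily with pairwise distinct colours, root first and hidden vertex last. A vertex
`v` of `B` loses at most `‖v, G − B‖` of its `k` colours to the colouring of `G − B`, and in this
order `‖v, G − B‖` never exceeds the number of vertices coloured after `v`, so the greedy never
gets stuck. It avoids the colours `F` whose classes are already full whenever it can; when it
cannot, the whole list of `v` lies in `F`, so at most `|F| + |B| − k` colours of `F` are reused.
As `|B| ≤ k`, every class grows by at most one and `⌈n / k⌉` grows by at most one, and the identity
`k ⌈n / k⌉ + (n mod* k) = n + k` shows that this bound is exactly what keeps the number of full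
classes within `n mod* k`. -/

open Finset

theorem modStar_pos {n k : ℕ} (hk : 0 < k) : 0 < modStar n k := by
  unfold modStar; split <;> omega

theorem modStar_le {n k : ℕ} (hk : 0 < k) : modStar n k ≤ k := by
  unfold modStar; split
  · exact le_rfl
  · exact (Nat.mod_lt n hk).le

/-- `(n + k - 1) / k = ⌈n / k⌉`; this is division of `n + k` by `k` with remainder in `{1,…,k}`. -/
theorem mul_ceilDiv_add_modStar {n k : ℕ} (hk : 0 < k) :
    k * ((n + k - 1) / k) + modStar n k = n + k := by
  have hdiv := Nat.div_add_mod n k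
  have hmod := Nat.mod_lt n hk
  unfold modStar
  split
  · have : (n + k - 1) / k = n / k := by
      rw [show n + k - 1 = (k - 1) + k * (n / k) by omega, Nat.add_mul_div_left _ _ hk,
        Nat.div_eq_of_lt (by omega), zero_add]
    rw [this]
    omega
  · have : (n + k - 1) / k = n / k + 1 := by
      rw [show n + k - 1 = (n % k - 1) + k * (n / k + 1) by rw [Nat.mul_add]; omega,
        Nat.add_mul_div_left _ _ hk, Nat.div_eq_of_lt (by omega), zero_add]
    rw [this, Nat.mul_add]
    omega

theorem ceilDiv_add_modStar_add {n b k : ℕ} (hb : 0 < b) (hbk : b ≤ k) :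
    ((n + b + k - 1) / k = (n + k - 1) / k ∧ modStar n k + b = modStar (n + b) k) ∨
      ((n + b + k - 1) / k = (n + k - 1) / k + 1 ∧ modStar n k + b = k + modStar (n + b) k) := by
  have hk : 0 < k := by omega
  have h₁ := mul_ceilDiv_add_modStar (n := n) hk
  have h₂ := mul_ceilDiv_add_modStar (n := n + b) hk
  have := modStar_pos (n := n) hk
  have := modStar_pos (n := n + b) hk
  have := modStar_le (n := n) hk
  have := modStar_le (n := n + b) hk
  set m₀ := (n + k - 1) / k
  set m₁ := (n + b + k - 1) / k
  have hlo : m₀ ≤ m₁ := by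
    by_contra! h
    have := Nat.mul_le_mul_left k h
    rw [Nat.mul_succ] at this
    omega
  have hhi : m₁ ≤ m₀ + 1 := by
    by_contra! h
    have := Nat.mul_le_mul_left k h
    rw [Nat.mul_succ, Nat.mul_succ] at this
    omega
  obtain h | h : m₁ = m₀ ∨ m₁ = m₀ + 1 := by omega
  · rw [h] at h₂
    omega
  · rw [h, Nat.mul_succ] at h₂
    omega

theorem List.forall_isSuffix_cons_iff {α : Type*} {p : α → List α → Prop} {a : α} {t : List α} :
    (∀ v s, v :: s <:+ a :: t → p v s) ↔ p a t ∧ ∀ v s, v :: s <:+ t → p v s := by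
  simp only [List.suffix_cons_iff, List.cons.injEq]
  constructor
  · exact fun h => ⟨h a t (Or.inl ⟨rfl, rfl⟩), fun v s hs => h v s (Or.inr hs)⟩
  · rintro ⟨ha, ht⟩ v s (⟨rfl, rfl⟩ | hs)
    exacts [ha, ht v s hs]

theorem Set.InjOn.update_insert {α β : Type*} [DecidableEq α] {c : α → β} {s : Set α}
    (hc : Set.InjOn c s) {a : α} {x : β} (hx : ∀ v ∈ s, c v ≠ x) :
    Set.InjOn (Function.update c a x) (insert a s) := by
  intro v hv w hw hvw
  by_cases hva : v = a <;> by_cases hwa : w = a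
  · rw [hva, hwa]
  · rw [hva, Function.update_self, Function.update_of_ne hwa] at hvw
    exact absurd hvw.symm (hx w (hw.resolve_left hwa))
  · rw [hwa, Function.update_self, Function.update_of_ne hva] at hvw
    exact absurd hvw (hx v (hv.resolve_left hva))
  · rw [Function.update_of_ne hva, Function.update_of_ne hwa] at hvw
    exact hc (hv.resolve_left hva) (hw.resolve_left hwa) hvw

theorem Finset.image_update_insert_subset {α β : Type*} [DecidableEq α] [DecidableEq β]
    (c : α → β) (s : Finset α) (a : α) (x : β) :
    (insert a s).image (Function.update c a x) ⊆ insert x (s.image c) := by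
  intro z hz
  obtain ⟨v, hv, rfl⟩ := mem_image.1 hz
  by_cases hva : v = a
  · simp [hva]
  · rw [Function.update_of_ne hva]
    exact mem_insert_of_mem (mem_image_of_mem c ((mem_insert.1 hv).resolve_left hva))

theorem Finset.Nonempty.exists_mem_imp_subset {β : Type*} {A : Finset β} (hA : A.Nonempty)
    (F : Finset β) : ∃ x ∈ A, x ∈ F → A ⊆ F := by
  by_cases h : A ⊆ F
  · obtain ⟨x, hx⟩ := hA
    exact ⟨x, hx, fun _ => h⟩
  · obtain ⟨x, hxA, hxF⟩ := not_subset.1 h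
    exact ⟨x, hxA, fun h' => absurd h' hxF⟩

/-- Greedily pick distinct representatives along `l`, outside `F` when possible; when it is not,
all of `A a` lies in `F`, which makes `F` large enough to pay for the representative. -/
theorem List.exists_injOn_card_image_inter_le {α β : Type*} [DecidableEq α] [DecidableEq β]
    [Nonempty β] (l : List α) (k : ℕ) (A : α → Finset β) (F : Finset β) (hl : l.length ≤ k)
    (hA : ∀ v s, v :: s <:+ l → k ≤ #(A v) + s.length) :
    ∃ c : α → β, (∀ v ∈ l.toFinset, c v ∈ A v) ∧ Set.InjOn c l.toFinset ∧
      #(l.toFinset.image c ∩ F) ≤ #F + l.length - k := by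
  induction l generalizing k A F with
  | nil => exact ⟨fun _ => Classical.arbitrary β, by simp, by simp, by simp⟩
  | cons a t ih =>
    rw [List.forall_isSuffix_cons_iff] at hA
    obtain ⟨hAa, hAt⟩ := hA
    rw [List.length_cons] at hl ⊢
    obtain ⟨x, hxA, hxF⟩ :=
      (card_pos.1 (show 0 < #(A a) by omega)).exists_mem_imp_subset F
    obtain ⟨c, hcA, hcinj, hcF⟩ := ih (k - 1) (fun v => (A v).erase x) (F.erase x) (by omega)
      fun v s hs => by
        have := hAt v s hs
        have := pred_card_le_card_erase (s := A v) (a := x)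
        omega
    have hcx : ∀ v ∈ t.toFinset, c v ≠ x := fun v hv => ne_of_mem_erase (hcA v hv)
    refine ⟨Function.update c a x, ?_, ?_, ?_⟩
    · intro v hv
      rw [List.toFinset_cons, mem_insert] at hv
      by_cases hva : v = a
      · subst hva; simpa using hxA
      · rw [Function.update_of_ne hva]
        exact Finset.mem_of_mem_erase (hcA v (hv.resolve_left hva))
    · rw [List.toFinset_cons, coe_insert]
      exact hcinj.update_insert hcx
    · have hsub := image_update_insert_subset c t.toFinset a x
      rw [← List.toFinset_cons] at hsub
      have hxS : x ∉ t.toFinset.image c := by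
        simpa only [mem_image, not_exists, not_and] using hcx
      rw [inter_erase, erase_eq_of_notMem (fun h => hxS (mem_inter.1 h).1)] at hcF
      have hle := card_le_card (inter_subset_inter_right (u := F) hsub)
      by_cases hx : x ∈ F
      · rw [insert_inter_of_mem hx] at hle
        have := card_insert_le x (t.toFinset.image c ∩ F)
        have := card_le_card (hxF hx)
        rw [card_erase_of_mem hx] at hcF
        omega
      · rw [insert_inter_of_notMem hx] at hle
        rw [erase_eq_of_notMem hx] at hcF
        omega

theorem List.le_length_of_cons_isSuffix_append_singleton {α : Type*} {e : α → ℕ} {t : List α}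
    {y : α} (ht : ∀ v ∈ t, e v ≤ 1) (hy : e y = 0) {v : α} {s : List α}
    (hs : v :: s <:+ t ++ [y]) : e v ≤ s.length := by
  by_cases hvy : v = y
  · rw [hvy, hy]
    exact Nat.zero_le _
  have hvt : v ∈ t := by simpa [hvy] using hs.subset List.mem_cons_self
  have hs0 : s ≠ [] := by
    rintro rfl
    exact hvy (List.singleton_suffix_append_singleton_iff.1 hs)
  have := List.length_pos_iff.2 hs0
  have := ht v hvt
  omega

section Graph

variable {V : Type*} (G : SimpleGraph V)

theorem deg_eq_degree (v : V) [Fintype (G.neighborSet v)] : deg G v = G.degree v := by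
  rw [deg, ← card_neighborFinset_eq_degree, neighborFinset_def, ← Set.ncard_eq_toFinset_card']
  rfl

theorem ncard_adj_notMem_eq_card_sdiff [Fintype V] [DecidableRel G.Adj] [DecidableEq V]
    (B : Finset V) (v : V) :
    Set.ncard {u | G.Adj v u ∧ u ∉ B} = #(G.neighborFinset v \ B) := by
  rw [← Set.ncard_coe_finset, Finset.coe_sdiff, coe_neighborFinset]
  rfl

theorem exists_adj_of_preconnected_induce {s : Set V} (hs : (G.induce s).Preconnected) {v w : V}
    (hv : v ∈ s) (hw : w ∈ s) (hvw : v ≠ w) : ∃ u ∈ s, G.Adj v u := by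
  obtain ⟨⟨u, hu⟩, hadj⟩ :=
    (hs ⟨v, hv⟩ ⟨w, hw⟩).nonempty_neighborSet_left (fun h => hvw (congrArg Subtype.val h))
  exact ⟨u, hu, hadj⟩

theorem card_neighborFinset_sdiff_lt_degree [Fintype V] [DecidableRel G.Adj] [DecidableEq V]
    {B : Finset V} {v w : V} (hw : w ∈ B) (hvw : G.Adj v w) :
    #(G.neighborFinset v \ B) < G.degree v := by
  rw [← card_neighborFinset_eq_degree]
  refine card_lt_card ((ssubset_iff_of_subset sdiff_subset).2 ⟨w, ?_, ?_⟩)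
  · simpa using hvw
  · simp [hw]

end Graph

section Bug

variable {V : Type*} [Fintype V] [DecidableEq V] {G : SimpleGraph V} [DecidableRel G.Adj]
  {B : Finset V} {r y : V}

/-- List the bug with the root first and the hidden vertex last. -/
theorem IsBug.exists_list (hbug : IsBug G B r) (hyB : y ∈ B) (hy : ∀ u, G.Adj y u → u ∈ B)
    (hr : #(G.neighborFinset r \ B) < #B) :
    ∃ l : List V, l.Nodup ∧ l.toFinset = B ∧
      ∀ v s, v :: s <:+ l → #(G.neighborFinset v \ B) ≤ s.length := by
  obtain ⟨hrB, hconn, hdeg⟩ := hbug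
  have hey : #(G.neighborFinset y \ B) = 0 := by
    rw [card_eq_zero, sdiff_eq_empty_iff_subset]
    exact fun u hu => hy u ((mem_neighborFinset G y u).1 hu)
  have hmid : ∀ v ∈ B, v ≠ r → v ≠ y → #(G.neighborFinset v \ B) ≤ 1 := fun v hv hvr hvy => by
    obtain ⟨w, hw, hvw⟩ := exists_adj_of_preconnected_induce G hconn.preconnected hv hyB hvy
    have := card_neighborFinset_sdiff_lt_degree G (mem_coe.1 hw) hvw
    have := hdeg v hv hvr
    rw [deg_eq_degree] at this
    omega
  set M := (B.erase r).erase y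
  have htail : ∀ v s, v :: s <:+ M.toList ++ [y] → #(G.neighborFinset v \ B) ≤ s.length :=
    fun _ _ => List.le_length_of_cons_isSuffix_append_singleton (t := M.toList) (fun v hv => by
      simp only [M, mem_toList, mem_erase] at hv
      exact hmid v hv.2.2 hv.2.1 hv.1) hey
  have htnd : (M.toList ++ [y]).Nodup := by simp [List.nodup_append, nodup_toList, M]; tauto
  by_cases hry : r = y
  · refine ⟨M.toList ++ [y], htnd, ?_, htail⟩
    ext v
    by_cases hvy : v = y <;> simp [M, hvy, hry, hyB]
  · have hl : (r :: (M.toList ++ [y])).toFinset = B := by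
      ext v
      by_cases hvr : v = r <;> by_cases hvy : v = y <;> simp [M, hvr, hvy, hrB, hyB]
    have hnd : (r :: (M.toList ++ [y])).Nodup := List.nodup_cons.2 ⟨by simp [M, hry], htnd⟩
    refine ⟨_, hnd, hl, List.forall_isSuffix_cons_iff.2 ⟨?_, htail⟩⟩
    have := List.toFinset_card_of_nodup hnd
    rw [hl, List.length_cons] at this
    omega

end Bug

section Extension

variable {V : Type*}

def fullColors (k : ℕ) (W : Finset V) (f : V → ℕ) : Finset ℕ :=
  (W.image f).filter fun x => #(W.filter fun v => f v = x) = (#W + k - 1) / k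

variable {k : ℕ} {U B W : Finset V} {f c : V → ℕ} {x : ℕ}

theorem mem_fullColors_iff :
    x ∈ fullColors k W f ↔ x ∈ W.image f ∧ #(W.filter fun v => f v = x) = (#W + k - 1) / k :=
  mem_filter

theorem mem_fullColors_of_card_eq (hm : 0 < (#W + k - 1) / k)
    (h : #(W.filter fun v => f v = x) = (#W + k - 1) / k) : x ∈ fullColors k W f := by
  obtain ⟨v, hv⟩ := card_pos.1 (h ▸ hm)
  exact mem_fullColors_iff.2 ⟨mem_image.2 ⟨v, (mem_filter.1 hv).1, (mem_filter.1 hv).2⟩, h⟩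

theorem card_filter_eq_le_one (hc : Set.InjOn c B) (x : ℕ) : #(B.filter fun v => c v = x) ≤ 1 :=
  card_le_one.2 fun _ hv _ hw =>
    hc (mem_filter.1 hv).1 (mem_filter.1 hw).1 ((mem_filter.1 hv).2.trans (mem_filter.1 hw).2.symm)

theorem mem_image_of_card_filter_pos (h : 0 < #(B.filter fun v => c v = x)) : x ∈ B.image c := by
  obtain ⟨v, hv⟩ := card_pos.1 h
  exact mem_image.2 ⟨v, (mem_filter.1 hv).1, (mem_filter.1 hv).2⟩

variable [DecidableEq V]

theorem card_filter_piecewise (hBU : B ⊆ U) (x : ℕ) :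
    #(U.filter fun v => B.piecewise c f v = x) =
      #((U \ B).filter fun v => f v = x) + #(B.filter fun v => c v = x) := by
  conv_lhs => rw [← sdiff_union_of_subset hBU, filter_union]
  rw [card_union_of_disjoint (disjoint_filter_filter sdiff_disjoint)]
  congr 2
  · exact filter_congr fun v hv => by rw [piecewise_eq_of_notMem _ _ _ (mem_sdiff.1 hv).2]
  · exact filter_congr fun v hv => by rw [piecewise_eq_of_mem _ _ _ hv]

theorem piecewise_classes_of_ceilDiv_eq (hBU : B ⊆ U) (hc : Set.InjOn c B)
    (hm : (#U + k - 1) / k = (#(U \ B) + k - 1) / k) (hm0 : 0 < (#U + k - 1) / k)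
    (hsize : ∀ x, #((U \ B).filter fun v => f v = x) ≤ (#(U \ B) + k - 1) / k)
    (hcF : Disjoint (B.image c) (fullColors k (U \ B) f)) :
    (∀ x, #(U.filter fun v => B.piecewise c f v = x) ≤ (#U + k - 1) / k) ∧
      fullColors k U (B.piecewise c f) ⊆ fullColors k (U \ B) f ∪ B.image c := by
  rw [hm] at hm0
  constructor
  · intro x
    rw [card_filter_piecewise hBU, hm]
    have := card_filter_eq_le_one hc x
    have := hsize x
    by_contra! h
    exact disjoint_left.1 hcF (mem_image_of_card_filter_pos (x := x) (by omega))
      (mem_fullColors_of_card_eq hm0 (by omega))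
  · intro x hx
    rw [mem_fullColors_iff, card_filter_piecewise hBU, hm] at hx
    rw [mem_union]
    by_cases hB : 0 < #(B.filter fun v => c v = x)
    · exact Or.inr (mem_image_of_card_filter_pos hB)
    · exact Or.inl (mem_fullColors_of_card_eq hm0 (by omega))

theorem piecewise_classes_of_ceilDiv_eq_add_one (hBU : B ⊆ U) (hc : Set.InjOn c B)
    (hm : (#U + k - 1) / k = (#(U \ B) + k - 1) / k + 1)
    (hsize : ∀ x, #((U \ B).filter fun v => f v = x) ≤ (#(U \ B) + k - 1) / k) :
    (∀ x, #(U.filter fun v => B.piecewise c f v = x) ≤ (#U + k - 1) / k) ∧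
      fullColors k U (B.piecewise c f) ⊆ B.image c ∧
      (0 < (#(U \ B) + k - 1) / k →
        fullColors k U (B.piecewise c f) ⊆ B.image c ∩ fullColors k (U \ B) f) := by
  have hfull : ∀ x ∈ fullColors k U (B.piecewise c f),
      x ∈ B.image c ∧ #((U \ B).filter fun v => f v = x) = (#(U \ B) + k - 1) / k := by
    intro x hx
    rw [mem_fullColors_iff, card_filter_piecewise hBU, hm] at hx
    have := card_filter_eq_le_one hc x
    have := hsize x
    exact ⟨mem_image_of_card_filter_pos (by omega), by omega⟩
  refine ⟨fun x => ?_, fun x hx => (hfull x hx).1, fun hm0 x hx =>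
    mem_inter.2 ⟨(hfull x hx).1, mem_fullColors_of_card_eq hm0 (hfull x hx).2⟩⟩
  rw [card_filter_piecewise hBU, hm]
  have := card_filter_eq_le_one hc x
  have := hsize x
  omega

theorem piecewise_classes_le (hBU : B ⊆ U) (hB : 0 < #B) (hBk : #B ≤ k) (hc : Set.InjOn c B)
    (hsize : ∀ x, #((U \ B).filter fun v => f v = x) ≤ (#(U \ B) + k - 1) / k)
    (hfull : #(fullColors k (U \ B) f) ≤ modStar #(U \ B) k)
    (hcF : #(B.image c ∩ fullColors k (U \ B) f) ≤ #(fullColors k (U \ B) f) + #B - k) :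
    (∀ x, #(U.filter fun v => B.piecewise c f v = x) ≤ (#U + k - 1) / k) ∧
      #(fullColors k U (B.piecewise c f)) ≤ modStar #U k := by
  have hk : 0 < k := by omega
  have hU : #(U \ B) + #B = #U := card_sdiff_add_card_eq_card hBU
  have hnew := card_image_le (s := B) (f := c)
  have := modStar_le (n := #U) hk
  rcases hU ▸ ceilDiv_add_modStar_add (n := #(U \ B)) hB hBk with ⟨hm, ht⟩ | ⟨hm, ht⟩
  · have hm0 : 0 < (#U + k - 1) / k := Nat.div_pos (by omega) hk
    have hdisj : Disjoint (B.image c) (fullColors k (U \ B) f) := by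
      rw [disjoint_iff_inter_eq_empty, ← card_eq_zero]
      omega
    obtain ⟨hsz, hsub⟩ := piecewise_classes_of_ceilDiv_eq hBU hc hm hm0 hsize hdisj
    have := (card_le_card hsub).trans (card_union_le _ _)
    exact ⟨hsz, by omega⟩
  · obtain ⟨hsz, hsubB, hsubF⟩ := piecewise_classes_of_ceilDiv_eq_add_one hBU hc hm hsize
    refine ⟨hsz, ?_⟩
    rcases Nat.eq_zero_or_pos ((#(U \ B) + k - 1) / k) with hm0 | hm0
    · have hdecomp := mul_ceilDiv_add_modStar (n := #(U \ B)) hk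
      have := modStar_le (n := #(U \ B)) hk
      rw [hm0, mul_zero] at hdecomp
      have := card_le_card hsubB
      omega
    · have := card_le_card (hsubF hm0)
      omega

end Extension

theorem IsSEColoringOn.piecewise {V : Type*} [Fintype V] [DecidableEq V] {G : SimpleGraph V}
    {k : ℕ} {L : V → Finset ℕ} {U B : Finset V} {f c : V → ℕ}
    (hf : IsSEColoringOn G k L (U \ B) f) (hBU : B ⊆ U) (hB : 0 < #B) (hBk : #B ≤ k)
    (hcL : ∀ v ∈ B, c v ∈ L v) (hcf : ∀ v ∈ B, ∀ u ∈ U \ B, G.Adj v u → c v ≠ f u)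
    (hc : Set.InjOn c B)
    (hcF : #(B.image c ∩ fullColors k (U \ B) f) ≤ #(fullColors k (U \ B) f) + #B - k) :
    IsSEColoringOn G k L U (B.piecewise c f) := by
  obtain ⟨hfL, hfG, hsize, hfull⟩ := hf
  refine ⟨fun v hv => ?_, fun u hu v hv huv => ?_,
    piecewise_classes_le hBU hB hBk hc hsize hfull hcF⟩
  · by_cases hvB : v ∈ B
    · rw [piecewise_eq_of_mem _ _ _ hvB]
      exact hcL v hvB
    · rw [piecewise_eq_of_notMem _ _ _ hvB]
      exact hfL v (mem_sdiff.2 ⟨hv, hvB⟩)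
  · by_cases huB : u ∈ B <;> by_cases hvB : v ∈ B <;>
      simp only [piecewise_eq_of_mem, piecewise_eq_of_notMem, huB, hvB, not_false_eq_true]
    · exact fun h => G.ne_of_adj huv (hc huB hvB h)
    · exact hcf u huB v (mem_sdiff.2 ⟨hv, hvB⟩) huv
    · exact (hcf v hvB u (mem_sdiff.2 ⟨hu, huB⟩) huv.symm).symm
    · exact hfG u (mem_sdiff.2 ⟨hu, huB⟩) v (mem_sdiff.2 ⟨hv, hvB⟩) huv

theorem stmt8_general {V : Type*} [Fintype V] [DecidableEq V] (G : SimpleGraph V)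
    (k : ℕ) (L : V → Finset ℕ) (hL : ∀ v, (L v).card = k)
    (B : Finset V) (r : V) (hbug : IsBug G B r)
    (hout : Set.ncard {u | G.Adj r u ∧ u ∉ B} < B.card)
    (hBk : B.card ≤ k)
    (hhidden : ∃ y ∈ B, ∀ u, G.Adj y u → u ∈ B) :
    SafeIn G k L Finset.univ B := by
  classical
  obtain ⟨y, hyB, hy⟩ := hhidden
  rw [ncard_adj_notMem_eq_card_sdiff] at hout
  obtain ⟨l, hnd, hlB, hl⟩ := hbug.exists_list hyB hy hout
  have hlen : l.length = #B := by rw [← hlB, List.toFinset_card_of_nodup hnd]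
  intro f hf
  have hA : ∀ v, k ≤ #(L v \ (G.neighborFinset v \ B).image f) + #(G.neighborFinset v \ B) :=
    fun v => by
      have := le_card_sdiff ((G.neighborFinset v \ B).image f) (L v)
      have := card_image_le (s := G.neighborFinset v \ B) (f := f)
      have := hL v
      omega
  obtain ⟨c, hcA, hc, hcF⟩ := l.exists_injOn_card_image_inter_le k
    (fun v => L v \ (G.neighborFinset v \ B).image f) (fullColors k (univ \ B) f) (hlen ▸ hBk)
    fun v s hs => (hA v).trans (Nat.add_le_add_left (hl v s hs) _)
  rw [hlB] at hcA hc hcF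
  rw [hlen] at hcF
  have hcf : ∀ v ∈ B, ∀ u ∈ univ \ B, G.Adj v u → c v ≠ f u := fun v hv u hu huv hcu =>
    (mem_sdiff.1 (hcA v hv)).2 <| mem_image.2
      ⟨u, mem_sdiff.2 ⟨(mem_neighborFinset G v u).2 huv, (mem_sdiff.1 hu).2⟩, hcu.symm⟩
  exact ⟨B.piecewise c f, fun v hv => piecewise_eq_of_notMem _ _ _ (mem_sdiff.1 hv).2,
    hf.piecewise (subset_univ B) (card_pos.2 ⟨r, hbug.1⟩) hBk
      (fun v hv => (mem_sdiff.1 (hcA v hv)).1) hcf hc hcF⟩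

/-- Let `B ⊆ G` be a bug with root `r`, `d_G(r) ≤ k`, and
`‖r, G − B‖ < |B| ≤ k`. If `B` has a hidden vertex, then `B` is safe in `G`. -/
theorem stmt8 {V : Type*} [Fintype V] [DecidableEq V] (G : SimpleGraph V)
    (k : ℕ) (hk : 3 ≤ k) (L : V → Finset ℕ) (hL : ∀ v, (L v).card = k)
    (B : Finset V) (r : V) (hbug : IsBug G B r)
    (hdr : deg G r ≤ k)
    (hout : Set.ncard {u | G.Adj r u ∧ u ∉ B} < B.card)
    (hBk : B.card ≤ k)
    (hhidden : ∃ y ∈ B, ∀ u, G.Adj y u → u ∈ B) :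
    SafeIn G k L Finset.univ B :=
  stmt8_general G k L hL B r hbug hout hBk hhidden
end
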